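/- Let ψ⁺ be a forward stationary solution, N ∈ ℕ, φ ∈ C(𝕋^d), and Q^N(x, n) = K_{−N,n}φ(x) − ψ⁺(x, n) for integers −N ≤ n ≤ 0 (with K_{−N,−N}φ = φ). Let z_{−N} be a minimizer of Q^N(·, −N), and let z : [−N, ∞) → 𝕋^d be a forward minimizer for ψ⁺ starting at z_{−N}: an absolutely continuous curve with z(−N) = z_{−N}, each compact restriction of which attains the action function between its endpoints, such that ψ⁺(z(−N), −N) = ψ⁺(z(n), n) − A_{−N,n}(z(−N), z(n)) for every integer n > −N. Then: (1) z(n) minimizes Q^N(·, n) for every integer −N ≤ n ≤ 0; (2) Q^N(z(j), j) = Q^N(z(k), k) for all integers −N ≤ j < k ≤ 0; (3) the restriction of z to [−N, 0] is a minimizer for K_{−N,0}φ at z(0). -/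

import Mathlib

open MeasureTheory

noncomputable section

/-- Euclidean space ℝ^d. -/
abbrev V (d : ℕ) := EuclideanSpace ℝ (Fin d)

/-- The torus 𝕋^d = ℝ^d/ℤ^d, as a product of circles, with its quotient distance. -/
abbrev Torus (d : ℕ) := Fin d → AddCircle (1 : ℝ)

/-- The canonical projection ℝ^d → 𝕋^d. -/
def projT {d : ℕ} (x : V d) : Torus d := fun i => (x i : AddCircle (1 : ℝ))

/-- `ζ` is an absolutely continuous curve on `[s,t]` with (square-integrable)
derivative `g`. -/
def IsAC {d : ℕ} (ζ g : ℝ → V d) (s t : ℝ) : Prop :=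
  IntegrableOn g (Set.Icc s t) ∧ IntegrableOn (fun τ => ‖g τ‖ ^ 2) (Set.Icc s t) ∧
    ∀ τ ∈ Set.Icc s t, ζ τ = ζ s + ∫ u in s..τ, g u

/-- The action 𝔸(ζ) = ∫_s^t (½|ζ̇|² − b·ζ̇) dτ − Σ_{s ≤ j < t} F_j(ζ(j)) of the curve `ζ`
with derivative `g`, for the kicked potentials `F`. -/
def action {d : ℕ} (F : ℤ → Torus d → ℝ) (b : V d) (ζ g : ℝ → V d) (s t : ℝ) : ℝ :=
  (∫ τ in s..t, ((1 : ℝ) / 2 * ‖g τ‖ ^ 2 - (inner ℝ b (g τ) : ℝ))) -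
    ∑ j ∈ Finset.Ico ⌈s⌉ ⌈t⌉, F j (projT (ζ (j : ℝ)))

/-- The action function A_{s,t}(x,x') = inf over absolutely continuous curves from
`x` to `x'`. -/
def actFn {d : ℕ} (F : ℤ → Torus d → ℝ) (b : V d) (s t : ℝ) (x x' : Torus d) : ℝ :=
  sInf {a | ∃ ζ g : ℝ → V d, IsAC ζ g s t ∧ projT (ζ s) = x ∧ projT (ζ t) = x' ∧
    action F b ζ g s t = a}

/-- The backward Lax–Oleinik operator K_{s,t}φ(x) = min_y (φ(y) + A_{s,t}(y,x)), with
the convention K_{s,s}φ = φ. -/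
def KOp {d : ℕ} (F : ℤ → Torus d → ℝ) (b : V d) (s t : ℝ) (φ : Torus d → ℝ) :
    Torus d → ℝ :=
  if s < t then fun x => sInf {a | ∃ y : Torus d, a = φ y + actFn F b s t y x} else φ

/-- The forward Lax–Oleinik operator Ǩ_{s,t}φ(x) = max_y (φ(y) − A_{s,t}(x,y)), with
the convention Ǩ_{s,s}φ = φ. -/
def KChk {d : ℕ} (F : ℤ → Torus d → ℝ) (b : V d) (s t : ℝ) (φ : Torus d → ℝ) :
    Torus d → ℝ :=
  if s < t then fun x => sSup {a | ∃ y : Torus d, a = φ y - actFn F b s t x y} else φ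

/-- The seminorm ‖ψ‖_* = min_C sup_x |ψ(x) − C|. -/
def starNorm {d : ℕ} (ψ : Torus d → ℝ) : ℝ := ⨅ C : ℝ, ⨆ x : Torus d, |ψ x - C|

/-- A minimizer for `K_{m,n}φ` at its terminal point `ζ(n)`. -/
def IsMinimizer {d : ℕ} (F : ℤ → Torus d → ℝ) (b : V d) (m n : ℤ) (φ : Torus d → ℝ)
    (ζ g : ℝ → V d) : Prop :=
  IsAC ζ g m n ∧
    KOp F b m n φ (projT (ζ (n : ℝ))) = φ (projT (ζ (m : ℝ))) + action F b ζ g m n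

/-- A curve attaining `Ǩ_{m,n}φ` at its initial point `ζ(m)`. -/
def IsMaximizer {d : ℕ} (F : ℤ → Torus d → ℝ) (b : V d) (m n : ℤ) (φ : Torus d → ℝ)
    (ζ g : ℝ → V d) : Prop :=
  IsAC ζ g m n ∧
    KChk F b m n φ (projT (ζ (m : ℝ))) = φ (projT (ζ (n : ℝ))) - action F b ζ g m n

/-- A backward stationary solution. -/
def IsBackwardSol {d : ℕ} (F : ℤ → Torus d → ℝ) (b : V d) (ψ : Torus d → ℤ → ℝ) : Prop :=
  (∀ n : ℤ, Continuous fun x => ψ x n) ∧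
    ∀ m n : ℤ, m < n → ∀ x, KOp F b m n (fun y => ψ y m) x = ψ x n

/-- A forward stationary solution. -/
def IsForwardSol {d : ℕ} (F : ℤ → Torus d → ℝ) (b : V d) (ψ : Torus d → ℤ → ℝ) : Prop :=
  (∀ n : ℤ, Continuous fun x => ψ x n) ∧
    ∀ m n : ℤ, m < n → ∀ x, KChk F b m n (fun y => ψ y n) x = ψ x m

/-- `ζ` is affine on each interval `[j-1, j]` with (left) velocity `v j`. -/
def AffineOnUnit {d : ℕ} (ζ : ℝ → V d) (v : ℤ → V d) (m n : ℤ) : Prop :=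
  ∀ j : ℤ, m < j → j ≤ n → ∀ τ ∈ Set.Icc ((j : ℝ) - 1) (j : ℝ),
    ζ τ = ζ (j : ℝ) + (τ - (j : ℝ)) • v j

/-! Write `Q(x, n) = K_{-N,n}φ(x) - ψ⁺(x, n)`. Forward stationarity of `ψ⁺` gives
`ψ⁺(y, n) - ψ⁺(x, -N) ≤ A_{-N,n}(x, y)`, so `Q(·, n) ≥ min Q(·, -N) = Q(z(-N), -N)` for every
`n ≥ -N`. Along the forward minimizer this is an equality: taking `y = z(-N)` in the infimum
defining `K` and using `ψ⁺(z(n), n) - ψ⁺(z(-N), -N) = A_{-N,n}(z(-N), z(n))` gives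
`Q(z(n), n) ≤ Q(z(-N), -N)`. Since `z` attains `A` on `[-N, 0]`, the same identity at `n = 0`
says that `z` realises `K_{-N,0}φ(z(0))`.

The families inside `K` and `Ǩ` are bounded, by compactness of the torus and
`½|v|² - b·v ≥ -½|b|²`, so their `sInf`/`sSup` are genuine and not junk values. -/

theorem neg_half_sq_le_half_sq_sub_inner {E : Type*} [NormedAddCommGroup E]
    [InnerProductSpace ℝ E] (b v : E) :
    -(‖b‖ ^ 2 / 2) ≤ 1 / 2 * ‖v‖ ^ 2 - inner ℝ b v := by
  nlinarith [real_inner_le_norm b v, sq_nonneg (‖b‖ - ‖v‖)]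

section

open Set

variable {d : ℕ}

theorem isOpenQuotientMap_projT : IsOpenQuotientMap (projT (d := d)) :=
  (IsOpenQuotientMap.piMap fun _ => QuotientAddGroup.isOpenQuotientMap_mk).comp
    (PiLp.homeomorph 2 fun _ : Fin d => ℝ).isOpenQuotientMap

theorem bddAbove_range_of_continuous_comp_projT {f : Torus d → ℝ}
    (hf : Continuous fun x : V d => f (projT x)) : BddAbove (range f) :=
  (isCompact_range (isOpenQuotientMap_projT.continuous_comp_iff.mp hf)).bddAbove

theorem exists_isAC_of_lt {s t : ℝ} (hst : s < t) (x y : Torus d) :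
    ∃ ζ g : ℝ → V d, IsAC ζ g s t ∧ projT (ζ s) = x ∧ projT (ζ t) = y := by
  obtain ⟨v, rfl⟩ := isOpenQuotientMap_projT.surjective x
  obtain ⟨w, rfl⟩ := isOpenQuotientMap_projT.surjective y
  refine ⟨fun τ => v + (τ - s) • (t - s)⁻¹ • (w - v), fun _ => (t - s)⁻¹ • (w - v),
    ⟨integrableOn_const measure_Icc_lt_top.ne, integrableOn_const measure_Icc_lt_top.ne,
      fun τ _ => by simp [smul_sub, smul_smul, mul_comm]⟩, by simp, ?_⟩
  beta_reduce
  rw [smul_smul, mul_inv_cancel₀ (sub_ne_zero.mpr hst.ne'), one_smul, add_sub_cancel]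

section LaxOleinik

variable {F : ℤ → Torus d → ℝ} {b : V d}

theorem action_ge {CF : ℤ → ℝ} (hCF : ∀ j x, F j x ≤ CF j) {ζ g : ℝ → V d} {s t : ℝ}
    (hst : s ≤ t) (hζ : IsAC ζ g s t) :
    -((t - s) * (‖b‖ ^ 2 / 2)) - ∑ j ∈ Finset.Ico ⌈s⌉ ⌈t⌉, CF j ≤ action F b ζ g s t := by
  have hkinetic : IntervalIntegrable (fun τ => 1 / 2 * ‖g τ‖ ^ 2 - inner ℝ b (g τ)) volume s t :=
    (intervalIntegrable_iff_integrableOn_Icc_of_le hst).mpr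
      ((hζ.2.1.const_mul _).sub ((innerSL ℝ b).integrable_comp hζ.1))
  have hint := intervalIntegral.integral_mono_on hst intervalIntegrable_const hkinetic
    fun τ _ => neg_half_sq_le_half_sq_sub_inner b (g τ)
  have hsum := Finset.sum_le_sum fun j (_ : j ∈ Finset.Ico ⌈s⌉ ⌈t⌉) => hCF j (projT (ζ j))
  rw [intervalIntegral.integral_const, smul_eq_mul, mul_neg] at hint
  rw [action]
  linarith

theorem exists_forall_le_actFn (hF : ∀ j, BddAbove (range (F j))) {s t : ℝ} (hst : s < t) :
    ∃ C, ∀ x y, C ≤ actFn F b s t x y := by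
  choose CF hCF using hF
  refine ⟨-((t - s) * (‖b‖ ^ 2 / 2)) - ∑ j ∈ Finset.Ico ⌈s⌉ ⌈t⌉, CF j,
    fun x y => le_csInf ?_ ?_⟩
  · obtain ⟨ζ, g, hζ, hx, hy⟩ := exists_isAC_of_lt hst x y
    exact ⟨_, ζ, g, hζ, hx, hy, rfl⟩
  · rintro _ ⟨ζ, g, hζ, -, -, rfl⟩
    exact action_ge (fun j x => hCF j (mem_range_self x)) hst.le hζ

theorem KOp_self (s : ℝ) (φ : Torus d → ℝ) : KOp F b s s φ = φ :=
  if_neg (lt_irrefl s)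

theorem KOp_of_lt {s t : ℝ} (hst : s < t) (φ : Torus d → ℝ) (x : Torus d) :
    KOp F b s t φ x = ⨅ y, φ y + actFn F b s t y x := by
  simp only [KOp, if_pos hst, iInf, range, eq_comm]

theorem KChk_of_lt {s t : ℝ} (hst : s < t) (φ : Torus d → ℝ) (x : Torus d) :
    KChk F b s t φ x = ⨆ y, φ y - actFn F b s t x y := by
  simp only [KChk, if_pos hst, iSup, range, eq_comm]

theorem KOp_le_add_actFn (hF : ∀ j, BddAbove (range (F j))) {φ : Torus d → ℝ}
    (hφ : BddBelow (range φ)) {s t : ℝ} (hst : s < t) (x y : Torus d) :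
    KOp F b s t φ x ≤ φ y + actFn F b s t y x := by
  obtain ⟨C, hC⟩ := exists_forall_le_actFn (b := b) hF hst
  obtain ⟨Cφ, hCφ⟩ := hφ
  rw [KOp_of_lt hst]
  refine ciInf_le ⟨Cφ + C, ?_⟩ y
  rintro _ ⟨y', rfl⟩
  exact add_le_add (hCφ (mem_range_self y')) (hC y' x)

theorem le_KOp {s t : ℝ} (hst : s < t) {φ : Torus d → ℝ} {x : Torus d} {c : ℝ}
    (h : ∀ y, c ≤ φ y + actFn F b s t y x) : c ≤ KOp F b s t φ x := by
  rw [KOp_of_lt hst]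
  exact le_ciInf h

theorem IsForwardSol.sub_le_actFn (hF : ∀ j, BddAbove (range (F j))) {ψ : Torus d → ℤ → ℝ}
    (hψ : IsForwardSol F b ψ) {j k : ℤ} (hjk : j < k) (x y : Torus d) :
    ψ y k - ψ x j ≤ actFn F b j k x y := by
  have hjk' : (j : ℝ) < k := Int.cast_lt.mpr hjk
  obtain ⟨C, hC⟩ := exists_forall_le_actFn (b := b) hF hjk'
  obtain ⟨Cψ, hCψ⟩ := (isCompact_range (hψ.1 k)).bddAbove
  have hbdd : BddAbove (range fun y => ψ y k - actFn F b j k x y) := by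
    refine ⟨Cψ - C, ?_⟩
    rintro _ ⟨y', rfl⟩
    exact sub_le_sub (hCψ (mem_range_self y')) (hC x y')
  have hsup := le_ciSup hbdd y
  rw [← KChk_of_lt hjk', hψ.2 j k hjk x] at hsup
  linarith

theorem le_KOp_sub (hF : ∀ j, BddAbove (range (F j))) {ψ : Torus d → ℤ → ℝ}
    (hψ : IsForwardSol F b ψ) {m n : ℤ} (hmn : m ≤ n) {φ : Torus d → ℝ} {c : ℝ}
    (hmin : ∀ y, c ≤ φ y - ψ y m) (x : Torus d) : c ≤ KOp F b m n φ x - ψ x n := by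
  rcases hmn.eq_or_lt with rfl | hlt
  · rw [KOp_self]
    exact hmin x
  · have hK : c + ψ x n ≤ KOp F b m n φ x := le_KOp (Int.cast_lt.mpr hlt) fun y => by
      linarith [hmin y, hψ.sub_le_actFn hF hlt y x]
    linarith

theorem KOp_sub_le_of_calibrated (hF : ∀ j, BddAbove (range (F j))) {φ : Torus d → ℝ}
    (hφ : BddBelow (range φ)) {ψ : Torus d → ℤ → ℝ} {m n : ℤ} (hmn : m < n) {x y : Torus d}
    (hcal : ψ x m = ψ y n - actFn F b m n x y) : KOp F b m n φ y - ψ y n ≤ φ x - ψ x m := by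
  linarith [KOp_le_add_actFn (b := b) hF hφ (Int.cast_lt.mpr hmn) y x]

theorem isMinimizer_self (m : ℤ) (φ : Torus d → ℝ) (ζ g : ℝ → V d) :
    IsMinimizer F b m m φ ζ g :=
  ⟨⟨by simp, by simp, by simp⟩, by simp [KOp_self, action]⟩

end LaxOleinik

end

theorem statement9 {d : ℕ} (F : ℤ → Torus d → ℝ)
    (hF : ∀ j : ℤ, ContDiff ℝ 2 fun x : V d => F j (projT x)) (b : V d)
    (ψp : Torus d → ℤ → ℝ) (hψp : IsForwardSol F b ψp)
    (N : ℕ) (φ : Torus d → ℝ) (hφ : Continuous φ)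
    (ζ g : ℝ → V d)
    -- z(−N) minimizes Q^N(·, −N), where Q^N(·,−N) = φ − ψ⁺(·,−N):
    (hz0 : ∀ x : Torus d,
      φ (projT (ζ (-(N : ℝ)))) - ψp (projT (ζ (-(N : ℝ)))) (-(N : ℤ)) ≤
        φ x - ψp x (-(N : ℤ)))
    -- z is absolutely continuous on [−N, ∞) and each compact restriction attains the
    -- action function between its endpoints:
    (hattain : ∀ a c : ℝ, -(N : ℝ) ≤ a → a < c → IsAC ζ g a c ∧
      action F b ζ g a c = actFn F b a c (projT (ζ a)) (projT (ζ c)))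
    -- z is a forward minimizer for ψ⁺:
    (hfwd : ∀ n : ℤ, -(N : ℤ) < n →
      ψp (projT (ζ (-(N : ℝ)))) (-(N : ℤ)) =
        ψp (projT (ζ (n : ℝ))) n -
          actFn F b (-(N : ℝ)) n (projT (ζ (-(N : ℝ)))) (projT (ζ (n : ℝ)))) :
    (∀ n : ℤ, -(N : ℤ) ≤ n → n ≤ 0 → ∀ x : Torus d,
      KOp F b (-(N : ℝ)) n φ (projT (ζ (n : ℝ))) - ψp (projT (ζ (n : ℝ))) n ≤
        KOp F b (-(N : ℝ)) n φ x - ψp x n) ∧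
    (∀ j k : ℤ, -(N : ℤ) ≤ j → j < k → k ≤ 0 →
      KOp F b (-(N : ℝ)) j φ (projT (ζ (j : ℝ))) - ψp (projT (ζ (j : ℝ))) j =
        KOp F b (-(N : ℝ)) k φ (projT (ζ (k : ℝ))) - ψp (projT (ζ (k : ℝ))) k) ∧
    IsMinimizer F b (-(N : ℤ)) 0 φ ζ g := by
  have hFb : ∀ j, BddAbove (Set.range (F j)) := fun j =>
    bddAbove_range_of_continuous_comp_projT (hF j).continuous
  have hφb : BddBelow (Set.range φ) := (isCompact_range hφ).bddBelow
  have hcast : (((-(N : ℤ)) : ℤ) : ℝ) = -(N : ℝ) := by push_cast; rfl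
  set x₀ := projT (ζ (-(N : ℝ)))
  have hQ_ge : ∀ n : ℤ, -(N : ℤ) ≤ n → ∀ x,
      φ x₀ - ψp x₀ (-N) ≤ KOp F b (-(N : ℝ)) n φ x - ψp x n := by
    intro n hn x
    simpa only [hcast] using le_KOp_sub hFb hψp hn hz0 x
  have hQ_eq : ∀ n : ℤ, -(N : ℤ) ≤ n →
      KOp F b (-(N : ℝ)) n φ (projT (ζ n)) - ψp (projT (ζ n)) n = φ x₀ - ψp x₀ (-N) := by
    intro n hn
    refine le_antisymm ?_ (hQ_ge n hn _)
    rcases hn.eq_or_lt with rfl | hlt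
    · rw [hcast, KOp_self]
    · simpa only [hcast] using
        KOp_sub_le_of_calibrated hFb hφb hlt (by rw [hcast]; exact hfwd n hlt)
  refine ⟨fun n hn _ x => (hQ_eq n hn).trans_le (hQ_ge n hn x),
    fun j k hj hjk _ => (hQ_eq j hj).trans (hQ_eq k (hj.trans hjk.le)).symm, ?_⟩
  rcases N.eq_zero_or_pos with rfl | hN
  · simpa using isMinimizer_self (F := F) (b := b) 0 φ ζ g
  · have h0 : -(N : ℝ) < ((0 : ℤ) : ℝ) := by simpa using hN
    obtain ⟨hAC, hact⟩ := hattain _ _ le_rfl h0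
    refine ⟨by rwa [hcast], ?_⟩
    have hQ0 := hQ_eq 0 (by omega)
    have hcal0 := hfwd 0 (by omega)
    rw [hcast]
    linarith
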